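/- Let R = LaurentPolynomial ℂ, t = T + T⁻¹ ∈ R, and fix an integer r. Let B_r be the quotient of the multivariate polynomial R-algebra on variables X_k indexed by {k : ℤ // r ≤ k} by the ideal generated by X_k · X_{k-1} − t · X_k + 1 for all k with k − 1 ≥ r. Then for every integer n with n ≥ −(r+1), there exists a ring homomorphism φ_n : B_r → RatFunc ℂ whose restriction to scalars R is the ring homomorphism LaurentPolynomial ℂ → RatFunc ℂ sending T to X, and which sends the image of X_k to (X^(n+k+1) − X^(-(n+k+1))) / (X^(n+k+2) − X^(-(n+k+2))) for every k ≥ r. (This is the paper's assertion, after Lemma 6.7, that for each n > −(r+2) there is an algebra representation of 𝓑_{≥r} obtained by mapping b_k to [n+k+1]/[n+k+2]; it rests on the identity [n+k]/[n+k+2] = [2]·[n+k+1]/[n+k+2] − 1.) -/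

import Mathlib

/-!
Write `⟨m⟩ = qBracket x m = x ^ m - x ^ (-m)`, so that `[m] = ⟨m⟩ / (x - x⁻¹)` at `q = x`.
The proposed images `b_k = ⟨n+k+1⟩ / ⟨n+k+2⟩` satisfy `b_k b_{k-1} = [2] b_k - 1` because, after
clearing denominators, this is the three-term recursion `(x + x⁻¹) ⟨m+1⟩ = ⟨m⟩ + ⟨m+2⟩`.
The denominators are nonzero in `ℂ(X)` since `X ^ m` has valuation `exp m` at infinity. Hence
evaluation at `X_k ↦ b_k` over `q ↦ X` kills the defining ideal and descends to `𝓑_{≥r}`.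
-/

open LaurentPolynomial

noncomputable section

/-- The ground ring `ℂ[q,q⁻¹]`. -/
abbrev GroundRing : Type := LaurentPolynomial ℂ

/-- `[2] = q + q⁻¹` in `ℂ[q,q⁻¹]`. -/
noncomputable def qtwo : GroundRing := T 1 + T (-1)

/-- The ideal of relations `X_k X_{k-1} - [2] X_k + 1` (for `k - 1 ≥ r`) in the
polynomial algebra over `ℂ[q,q⁻¹]` on variables `X_k`, `k ≥ r`. -/
noncomputable def relIdeal (r : ℤ) : Ideal (MvPolynomial {k : ℤ // r ≤ k} GroundRing) :=
  Ideal.span { f | ∃ (k : ℤ) (hk : r ≤ k) (hk' : r ≤ k - 1),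
    f = MvPolynomial.X ⟨k, hk⟩ * MvPolynomial.X ⟨k - 1, hk'⟩
        - MvPolynomial.C qtwo * MvPolynomial.X ⟨k, hk⟩ + 1 }

/-- The algebra `𝓑_{≥r}`. -/
abbrev BoxAlgebra (r : ℤ) : Type := MvPolynomial {k : ℤ // r ≤ k} GroundRing ⧸ relIdeal r

/-- The embedding `ℂ[q,q⁻¹] → ℂ(X)` sending `T` (i.e. `q`) to `X`. -/
noncomputable def laurentToRatFunc : LaurentPolynomial ℂ →ₐ[ℂ] RatFunc ℂ :=
  AddMonoidAlgebra.lift ℂ (RatFunc ℂ) ℤ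
    { toFun := fun n => (RatFunc.X : RatFunc ℂ) ^ (Multiplicative.toAdd n)
      map_one' := by simp
      map_mul' := fun a b => by
        simp only [toAdd_mul]
        exact zpow_add₀ RatFunc.X_ne_zero _ _ }

section QuantumBracket

variable {K : Type*} [Field K]

def qBracket (x : K) (m : ℤ) : K := x ^ m - x ^ (-m)

theorem add_inv_mul_qBracket_add_one {x : K} (hx : x ≠ 0) (m : ℤ) :
    (x + x⁻¹) * qBracket x (m + 1) = qBracket x m + qBracket x (m + 2) := by
  simp only [qBracket, neg_add, zpow_add₀ hx, zpow_neg, zpow_one]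
  field_simp
  ring

theorem qBracket_div_mul_qBracket_div {x : K} (hx : x ≠ 0) {m : ℤ}
    (h₁ : qBracket x (m + 1) ≠ 0) (h₂ : qBracket x (m + 2) ≠ 0) :
    qBracket x (m + 1) / qBracket x (m + 2) * (qBracket x m / qBracket x (m + 1)) =
      (x + x⁻¹) * (qBracket x (m + 1) / qBracket x (m + 2)) - 1 := by
  have h := add_inv_mul_qBracket_add_one hx m
  field_simp at h ⊢
  linear_combination -h

theorem RatFunc.qBracket_X_ne_zero {m : ℤ} (hm : m ≠ 0) :
    qBracket (RatFunc.X : RatFunc K) m ≠ 0 := by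
  classical
  intro h
  have := congrArg (RatFunc.inftyValuation K) (sub_eq_zero.mp h)
  simp only [RatFunc.inftyValuation.X_zpow, WithZero.exp_inj] at this
  omega

end QuantumBracket

theorem laurentToRatFunc_T (z : ℤ) : laurentToRatFunc (T z) = (RatFunc.X : RatFunc ℂ) ^ z := by
  rw [laurentToRatFunc, T, AddMonoidAlgebra.lift_single]
  simp

theorem laurentToRatFunc_qtwo : laurentToRatFunc qtwo = RatFunc.X + RatFunc.X⁻¹ := by
  simp only [qtwo, map_add, laurentToRatFunc_T, zpow_one, zpow_neg]

namespace BoxAlgebra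

variable {r : ℤ} {S : Type*} [CommRing S] (g : GroundRing →+* S) (b : {k : ℤ // r ≤ k} → S)
  (hb : ∀ (k : ℤ) (hk : r ≤ k) (hk' : r ≤ k - 1),
    b ⟨k, hk⟩ * b ⟨k - 1, hk'⟩ = g qtwo * b ⟨k, hk⟩ - 1)

include hb in
theorem relIdeal_le_ker_eval₂Hom : relIdeal r ≤ RingHom.ker (MvPolynomial.eval₂Hom g b) := by
  rw [relIdeal, Ideal.span_le]
  rintro _ ⟨k, hk, hk', rfl⟩
  simp [hb]

def lift : BoxAlgebra r →+* S :=
  Ideal.Quotient.lift _ (MvPolynomial.eval₂Hom g b) fun _ ha ↦ relIdeal_le_ker_eval₂Hom g b hb ha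

theorem lift_algebraMap (c : GroundRing) :
    lift g b hb (algebraMap GroundRing (BoxAlgebra r) c) = g c :=
  MvPolynomial.eval₂Hom_C g b c

theorem lift_mk_X (k : {k : ℤ // r ≤ k}) :
    lift g b hb (Ideal.Quotient.mk (relIdeal r) (MvPolynomial.X k)) = b k :=
  MvPolynomial.eval₂Hom_X' g b k

end BoxAlgebra

/-- For every `n ≥ -(r+1)` there is a representation of `𝓑_{≥r}` in `ℂ(X)` extending
`q ↦ X` and sending `b_k` to `[n+k+1]/[n+k+2]`. -/
theorem box_algebra_rep (r : ℤ) :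
    ∀ n : ℤ, -(r + 1) ≤ n →
      ∃ φ : BoxAlgebra r →+* RatFunc ℂ,
        (∀ c : GroundRing, φ (algebraMap GroundRing (BoxAlgebra r) c) = laurentToRatFunc c) ∧
        (∀ k : {k : ℤ // r ≤ k},
          φ (Ideal.Quotient.mk (relIdeal r) (MvPolynomial.X k)) =
            ((RatFunc.X : RatFunc ℂ) ^ (n + (k : ℤ) + 1) - RatFunc.X ^ (-(n + (k : ℤ) + 1))) /
              ((RatFunc.X : RatFunc ℂ) ^ (n + (k : ℤ) + 2) -
                RatFunc.X ^ (-(n + (k : ℤ) + 2)))) := by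
  intro n hn
  let b : {k : ℤ // r ≤ k} → RatFunc ℂ := fun k ↦
    qBracket RatFunc.X (n + k + 1) / qBracket RatFunc.X (n + k + 2)
  have hb : ∀ (k : ℤ) (hk : r ≤ k) (hk' : r ≤ k - 1),
      b ⟨k, hk⟩ * b ⟨k - 1, hk'⟩ = laurentToRatFunc qtwo * b ⟨k, hk⟩ - 1 := by
    intro k hk hk'
    simp only [b, laurentToRatFunc_qtwo, show n + (k - 1) + 1 = n + k by ring,
      show n + (k - 1) + 2 = n + k + 1 by ring]
    exact qBracket_div_mul_qBracket_div RatFunc.X_ne_zero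
      (RatFunc.qBracket_X_ne_zero (by omega)) (RatFunc.qBracket_X_ne_zero (by omega))
  exact ⟨BoxAlgebra.lift laurentToRatFunc.toRingHom b hb,
    BoxAlgebra.lift_algebraMap _ b hb, BoxAlgebra.lift_mk_X _ b hb⟩
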